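/- (Well-definedness of d̆*) For all natural numbers k ≥ 1 and q with n = k + q, the operator k·(S_{{1,…,k}} ⊗ id) (symmetrization of the first k tensor positions scaled by k) maps the subspace H_{k−1,q+1} of H^{⊗n} into the subspace H_{k,q}, and on elementary tensors it satisfies k·(S_{{1,…,k}} ⊗ id)(h₁⊙…⊙h_{k−1} ⊗ x₁∧…∧x_{q+1}) = Σ_{i=1}^{q+1} (−1)^{i−1} h₁⊙…⊙h_{k−1}⊙x_i ⊗ x₁∧…∧x̂_i∧…∧x_{q+1}. -/

import Mathlib

open scoped BigOperators

noncomputable section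

variable (F : Type*) [Field F] [CharZero F] (H : Type*) [AddCommGroup H] [Module F H]

/-- The `n`-th tensor power of `H` over `F`. -/
abbrev TP (n : ℕ) : Type _ := PiTensorProduct F (fun _ : Fin n => H)

/-- The action of a permutation `σ ∈ S_n` on the `n`-th tensor power,
permuting the tensor factors. -/
def permMap (n : ℕ) (σ : Equiv.Perm (Fin n)) : TP F H n →ₗ[F] TP F H n :=
  (PiTensorProduct.reindex F (fun _ : Fin n => H) σ).toLinearMap

/-- Identification of tensor powers of equal degrees. -/
def tpCast {m m' : ℕ} (hm : m = m') : TP F H m →ₗ[F] TP F H m' :=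
  (PiTensorProduct.reindex F (fun _ : Fin m => H) (finCongr hm)).toLinearMap

/-- The permutations of `{1, …, n}` moving only positions in `a`. -/
def permsOn (n : ℕ) (a : Finset (Fin n)) : Finset (Equiv.Perm (Fin n)) :=
  Finset.univ.filter fun σ => ∀ i, i ∉ a → σ i = i

/-- `S_a`: symmetrisation over the positions in `a` (the average over all
permutations of the positions in `a`, fixing the other positions). -/
def symOn (n : ℕ) (a : Finset (Fin n)) : TP F H n →ₗ[F] TP F H n :=
  (a.card.factorial : F)⁻¹ • ∑ σ ∈ permsOn n a, permMap F H n σ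

/-- `A_a`: skew-symmetrisation over the positions in `a` (the signed average over
all permutations of the positions in `a`, fixing the other positions). -/
def altOn (n : ℕ) (a : Finset (Fin n)) : TP F H n →ₗ[F] TP F H n :=
  (a.card.factorial : F)⁻¹ • ∑ σ ∈ permsOn n a, (Equiv.Perm.sign σ : ℤ) • permMap F H n σ

/-- The first `k` positions of `{1, …, n}`. -/
def firstSet (n k : ℕ) : Finset (Fin n) := Finset.univ.filter fun i => (i : ℕ) < k

/-- The last `m` positions of `{1, …, n}`. -/
def lastSet (n m : ℕ) : Finset (Fin n) := Finset.univ.filter fun i => n - m ≤ (i : ℕ)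

/-- `H^{⊙a,∧aᶜ}`: the image of `S_a ∘ A_{aᶜ}`, the subspace of `n`-tensors symmetric in
the positions of `a` and skew-symmetric in the positions of `aᶜ`. -/
def Hgen (n : ℕ) (a : Finset (Fin n)) : Submodule F (TP F H n) :=
  LinearMap.range (symOn F H n a ∘ₗ altOn F H n aᶜ)

/-- `H_{k,n-k} = H^{⊙k} ⊗ H^{∧(n-k)}`: the subspace of `n`-tensors symmetric in the
first `k` positions and skew-symmetric in the remaining positions. -/
def Hmix (n k : ℕ) : Submodule F (TP F H n) := Hgen F H n (firstSet n k)

/-- `H^{⊙[k],∧[n-k]}`: the span of the subspaces `H^{⊙a,∧aᶜ}` over all `k`-element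
subsets `a ⊆ {1, …, n}`. -/
def HmixSpan (n k : ℕ) : Submodule F (TP F H n) :=
  ⨆ a ∈ {a : Finset (Fin n) | a.card = k}, Hgen F H n a

/-- The global operator whose restriction to `H_{k,q}` (with `m = q + 1`, `n = k + q`)
is `d̆_q`: skew-symmetrisation of the last `m` positions, scaled by `m`. -/
def dOp (n m : ℕ) : TP F H n →ₗ[F] TP F H n := (m : F) • altOn F H n (lastSet n m)

/-- The global operator whose restriction to `H_{k-1,q+1}` (with `m = k`, `n = k + q`)
is `d̆*_q`: symmetrisation of the first `m` positions, scaled by `m`. -/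
def dStarOp (n m : ℕ) : TP F H n →ₗ[F] TP F H n := (m : F) • symOn F H n (firstSet n m)

/-- The elementary element `h₁⊙…⊙h_k ⊗ x₁∧…∧x_q` of `H_{k,q} ⊆ H^{⊗(k+q)}`. -/
def elem (k q : ℕ) (h : Fin k → H) (x : Fin q → H) : TP F H (k + q) :=
  ∑ ρ : Equiv.Perm (Fin k), ∑ τ : Equiv.Perm (Fin q),
    (Equiv.Perm.sign τ : ℤ) •
      (PiTensorProduct.tprod F (Fin.append (h ∘ ρ) (x ∘ τ)) : TP F H (k + q))

/-!
Write `S_j` for the symmetrizer of the first `j` positions. Summing an elementary tensor over the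
permutations of its symmetric block is `k! • S_k`, so `elem h x = k! • Σ_τ sgn τ • S_k (h ⊗ x∘τ)`.
Since `S_{k+1}` absorbs every permutation of the first `k` positions, `(k+1) • S_{k+1}` sends
`h₁⊙…⊙h_k ⊗ x₀∧…∧x_q` to `(k+1)! • Σ_τ sgn τ • S_{k+1} (h ⊗ x∘τ)`. Factoring each `τ ∈ S_{q+1}`
as the cycle bringing `τ 0 = i` to the front (sign `(-1)^i`) followed by a permutation of the
remaining `q` slots expands this sum along the first skew slot; regrouping `h ⊗ x_i` as one
`(k+1)`-tuple turns the `i`-th term into `(-1)^i` times the elementary element of `H_{k+1,q}`.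
Membership in `H_{k+1,q}` follows, as `H_{k,q+1}` is spanned by elementary elements.
-/

open Equiv Finset PiTensorProduct

section Permutations

variable {ι β : Type*} [Fintype ι] [DecidableEq β]

theorem Equiv.Perm.viaFintypeEmbedding_injective (f : ι ↪ β) :
    Function.Injective fun σ : Perm ι => σ.viaFintypeEmbedding f :=
  extendDomainHom_injective f.toEquivRange

theorem Equiv.Perm.viaFintypeEmbedding_symm (σ : Perm ι) (f : ι ↪ β) :
    (σ.viaFintypeEmbedding f).symm = σ⁻¹.viaFintypeEmbedding f :=
  extendDomain_inv _ _

theorem Equiv.Perm.exists_viaFintypeEmbedding_eq {f : ι ↪ β} {π : Perm β}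
    (hπ : ∀ b ∉ Set.range f, π b = b) : ∃ σ : Perm ι, σ.viaFintypeEmbedding f = π := by
  have hrange : ∀ b, π b ∈ Set.range f ↔ b ∈ Set.range f := by
    intro b
    by_cases hb : b ∈ Set.range f
    · refine iff_of_true (by_contra fun h => h ?_) hb
      rwa [π.injective (hπ _ h)]
    · rw [hπ b hb]
  refine ⟨f.toEquivRange.symm.permCongr (π.subtypePerm hrange), Equiv.ext fun b => ?_⟩
  by_cases hb : b ∈ Set.range f
  · obtain ⟨a, rfl⟩ := hb
    have key := congrArg Subtype.val
      (f.toEquivRange.apply_symm_apply ⟨π (f a), (hrange _).2 ⟨a, rfl⟩⟩)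
    rw [Function.Embedding.toEquivRange_apply] at key
    simpa using key
  · rw [viaFintypeEmbedding_apply_notMem_range _ _ hb, hπ b hb]

theorem Equiv.Perm.sum_sign_smul_comp_succ {α M : Type*} [AddCommGroup M] {q : ℕ}
    (G : (Fin (q + 1) → α) → M) (x : Fin (q + 1) → α) :
    ∑ τ : Perm (Fin (q + 1)), (sign τ : ℤ) • G (x ∘ τ) =
      ∑ i : Fin (q + 1), (-1 : ℤ) ^ (i : ℕ) •
        ∑ τ : Perm (Fin q), (sign τ : ℤ) •
          G (Fin.cons (x i) (x ∘ i.succAbove ∘ τ)) := by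
  set e : Fin (q + 1) × Perm (Fin q) → Perm (Fin (q + 1)) :=
    fun p => p.1.cycleRange.symm * decomposeFin.symm (0, p.2) with he
  have e_zero : ∀ p, e p 0 = p.1 := fun p => by
    simp [he, decomposeFin_symm_apply_zero]
  have comp_e : ∀ p, x ∘ e p = Fin.cons (x p.1) (x ∘ p.1.succAbove ∘ p.2) := fun p => by
    funext j
    cases j using Fin.cases <;>
      simp [he, decomposeFin_symm_apply_zero, decomposeFin_symm_apply_succ]
  have sign_e : ∀ p, sign (e p) = (-1) ^ (p.1 : ℕ) * sign p.2 := fun p => by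
    simp [he, decomposeFin.symm_sign]
  have e_injective : Function.Injective e := by
    rintro ⟨i, τ⟩ ⟨j, υ⟩ hij
    obtain rfl : i = j := by simpa only [e_zero] using congrArg (· 0) hij
    have := decomposeFin.symm.injective (mul_left_cancel hij)
    simp_all
  have e_bijective : Function.Bijective e :=
    (Fintype.bijective_iff_injective_and_card e).2
      ⟨e_injective, by simp [Fintype.card_perm, Nat.factorial_succ]⟩
  rw [← Fintype.sum_bijective e e_bijective _ _ fun _ => rfl, Fintype.sum_prod_type]
  simp only [comp_e, sign_e, Finset.smul_sum, smul_smul]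
  push_cast
  rfl

end Permutations

section PermsOn

variable {ι : Type*} [Fintype ι] {n : ℕ}

theorem mem_permsOn {a : Finset (Fin n)} {π : Perm (Fin n)} :
    π ∈ permsOn n a ↔ ∀ i ∉ a, π i = i := by
  simp [permsOn]

theorem viaFintypeEmbedding_mem_permsOn {a : Finset (Fin n)} {f : ι ↪ Fin n}
    (hf : ∀ i, f i ∈ a) (σ : Perm ι) : σ.viaFintypeEmbedding f ∈ permsOn n a :=
  mem_permsOn.2 fun _ hi =>
    Perm.viaFintypeEmbedding_apply_notMem_range _ _ fun ⟨j, hj⟩ => hi (hj ▸ hf j)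

theorem permsOn_map [DecidableEq ι] (f : ι ↪ Fin n) :
    permsOn n (univ.map f) = univ.image fun σ : Perm ι => σ.viaFintypeEmbedding f := by
  ext π
  simp only [mem_image, mem_univ, true_and]
  constructor
  · intro hπ
    exact Perm.exists_viaFintypeEmbedding_eq fun b hb => mem_permsOn.1 hπ b (by simpa using hb)
  · rintro ⟨σ, rfl⟩
    exact viaFintypeEmbedding_mem_permsOn (by simp) σ

theorem mul_mem_permsOn {a : Finset (Fin n)} {σ π : Perm (Fin n)} (hσ : σ ∈ permsOn n a)
    (hπ : π ∈ permsOn n a) : σ * π ∈ permsOn n a :=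
  mem_permsOn.2 fun i hi => by
    rw [Perm.mul_apply, mem_permsOn.1 hπ i hi, mem_permsOn.1 hσ i hi]

theorem inv_mem_permsOn {a : Finset (Fin n)} {π : Perm (Fin n)} (hπ : π ∈ permsOn n a) :
    π⁻¹ ∈ permsOn n a :=
  mem_permsOn.2 fun i hi => Perm.inv_eq_iff_eq.2 (mem_permsOn.1 hπ i hi).symm

theorem firstSet_eq_map (k m : ℕ) : firstSet (k + m) k = univ.map (Fin.castAddEmb m) := by
  ext i
  simp only [firstSet, mem_filter, mem_univ, true_and, mem_map]
  exact ⟨fun hi => ⟨⟨i, hi⟩, rfl⟩, by rintro ⟨j, rfl⟩; exact j.isLt⟩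

theorem compl_firstSet_eq_map (k m : ℕ) :
    (firstSet (k + m) k)ᶜ = univ.map (Fin.natAddEmb k) := by
  ext i
  simp only [firstSet, mem_compl, mem_filter, mem_univ, true_and, mem_map, not_lt]
  refine ⟨fun hi => ⟨⟨i - k, by omega⟩, Fin.ext ?_⟩, ?_⟩
  · simp only [Fin.natAddEmb_apply, Fin.val_natAdd]
    omega
  · rintro ⟨j, rfl⟩
    simp

end PermsOn

section Append

variable {α : Type*} {k m : ℕ}

theorem Fin.append_comp_viaFintypeEmbedding_castAddEmb (u : Fin k → α) (v : Fin m → α)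
    (σ : Perm (Fin k)) :
    Fin.append u v ∘ σ.viaFintypeEmbedding (Fin.castAddEmb m) = Fin.append (u ∘ σ) v := by
  funext p
  refine Fin.addCases (fun i => ?_) (fun j => ?_) p
  · change Fin.append u v (σ.viaFintypeEmbedding _ (Fin.castAddEmb m i)) = _
    rw [Perm.viaFintypeEmbedding_apply_image]
    simp
  · rw [Function.comp_apply, Perm.viaFintypeEmbedding_apply_notMem_range]
    · simp
    · rintro ⟨i, hi⟩
      simp only [Fin.ext_iff, Fin.coe_castAddEmb, Fin.val_castAdd, Fin.val_natAdd] at hi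
      omega

theorem Fin.append_comp_viaFintypeEmbedding_natAddEmb (u : Fin k → α) (v : Fin m → α)
    (τ : Perm (Fin m)) :
    Fin.append u v ∘ τ.viaFintypeEmbedding (Fin.natAddEmb k) = Fin.append u (v ∘ τ) := by
  funext p
  refine Fin.addCases (fun i => ?_) (fun j => ?_) p
  · rw [Function.comp_apply, Perm.viaFintypeEmbedding_apply_notMem_range]
    · simp
    · rintro ⟨j, hj⟩
      simp only [Fin.ext_iff, Fin.natAddEmb_apply, Fin.val_natAdd, Fin.val_castAdd] at hj
      omega
  · change Fin.append u v (τ.viaFintypeEmbedding _ (Fin.natAddEmb k j)) = _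
    rw [Perm.viaFintypeEmbedding_apply_image]
    simp

end Append

section

omit [CharZero F]

section Tensor

variable {n : ℕ}

theorem permMap_tprod (σ : Perm (Fin n)) (g : Fin n → H) :
    permMap F H n σ (tprod F g) = tprod F (g ∘ σ.symm) :=
  reindex_tprod _ _

theorem permMap_permMap (σ π : Perm (Fin n)) (v : TP F H n) :
    permMap F H n σ (permMap F H n π v) = permMap F H n (σ * π) v :=
  reindex_reindex _ _ _

theorem symOn_permMap {a : Finset (Fin n)} {π : Perm (Fin n)} (hπ : π ∈ permsOn n a)
    (v : TP F H n) : symOn F H n a (permMap F H n π v) = symOn F H n a v := by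
  simp only [symOn, LinearMap.smul_apply, LinearMap.sum_apply, permMap_permMap]
  congr 1
  exact Finset.sum_nbij' (· * π) (· * π⁻¹) (fun _ hσ => mul_mem_permsOn hσ hπ)
    (fun _ hσ => mul_mem_permsOn hσ (inv_mem_permsOn hπ)) (fun _ _ => mul_inv_cancel_right _ _)
    (fun _ _ => inv_mul_cancel_right _ _) fun _ _ => rfl

theorem symOn_tprod_comp {a : Finset (Fin n)} {π : Perm (Fin n)} (hπ : π ∈ permsOn n a)
    (g : Fin n → H) : symOn F H n a (tprod F (g ∘ π)) = symOn F H n a (tprod F g) := by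
  calc symOn F H n a (tprod F (g ∘ π))
      = symOn F H n a (permMap F H n π⁻¹ (tprod F g)) := by rw [permMap_tprod]; rfl
    _ = symOn F H n a (tprod F g) := symOn_permMap F H (inv_mem_permsOn hπ) _

variable {ι : Type*} [Fintype ι] [DecidableEq ι]

theorem symOn_map_tprod (f : ι ↪ Fin n) (g : Fin n → H) :
    symOn F H n (univ.map f) (tprod F g) =
      ((Fintype.card ι).factorial : F)⁻¹ •
        ∑ σ : Perm ι, tprod F (g ∘ σ.viaFintypeEmbedding f) := by
  rw [symOn, permsOn_map, sum_image fun _ _ _ _ h => Perm.viaFintypeEmbedding_injective f h,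
    card_map, card_univ]
  simp only [LinearMap.smul_apply, LinearMap.sum_apply, permMap_tprod]
  congr 1
  exact Fintype.sum_equiv (Equiv.inv _) _ _ fun σ => by
    simp [Perm.viaFintypeEmbedding_symm]

theorem altOn_map_tprod (f : ι ↪ Fin n) (g : Fin n → H) :
    altOn F H n (univ.map f) (tprod F g) =
      ((Fintype.card ι).factorial : F)⁻¹ •
        ∑ σ : Perm ι, (Perm.sign σ : ℤ) • tprod F (g ∘ σ.viaFintypeEmbedding f) := by
  rw [altOn, permsOn_map, sum_image fun _ _ _ _ h => Perm.viaFintypeEmbedding_injective f h,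
    card_map, card_univ]
  simp only [LinearMap.smul_apply, LinearMap.sum_apply]
  congr 1
  exact Fintype.sum_equiv (Equiv.inv _) _ _ fun σ => by
    change (Perm.sign _ : ℤ) • permMap F H n _ (tprod F g) = _
    simp [permMap_tprod, Perm.viaFintypeEmbedding_symm]

end Tensor

section Elementary

variable {k m : ℕ}

theorem symOn_firstSet_tprod_append (g : Fin k → H) (w : Fin m → H) :
    symOn F H (k + m) (firstSet (k + m) k) (tprod F (Fin.append g w)) =
      (k.factorial : F)⁻¹ • ∑ ρ : Perm (Fin k), tprod F (Fin.append (g ∘ ρ) w) := by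
  simp only [firstSet_eq_map, symOn_map_tprod, Fintype.card_fin,
    Fin.append_comp_viaFintypeEmbedding_castAddEmb]

theorem altOn_compl_firstSet_tprod_append (g : Fin k → H) (w : Fin m → H) :
    altOn F H (k + m) (firstSet (k + m) k)ᶜ (tprod F (Fin.append g w)) =
      (m.factorial : F)⁻¹ •
        ∑ τ : Perm (Fin m), (Perm.sign τ : ℤ) • tprod F (Fin.append g (w ∘ τ)) := by
  simp only [compl_firstSet_eq_map, altOn_map_tprod, Fintype.card_fin,
    Fin.append_comp_viaFintypeEmbedding_natAddEmb]

theorem symOn_altOn_tprod_append (g : Fin k → H) (w : Fin m → H) :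
    symOn F H (k + m) (firstSet (k + m) k)
        (altOn F H (k + m) (firstSet (k + m) k)ᶜ (tprod F (Fin.append g w))) =
      ((k.factorial : F)⁻¹ * (m.factorial : F)⁻¹) • elem F H k m g w := by
  simp only [altOn_compl_firstSet_tprod_append, map_smul, map_sum,
    symOn_firstSet_tprod_append, elem, ← Int.cast_smul_eq_zsmul F, Finset.smul_sum]
  rw [Finset.sum_comm]
  refine Finset.sum_congr rfl fun ρ _ => Finset.sum_congr rfl fun τ _ => ?_
  module

theorem symOn_firstSet_tprod_append_comp {j : ℕ} (hkj : k ≤ j) (g : Fin k → H)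
    (ρ : Perm (Fin k)) (w : Fin m → H) :
    symOn F H (k + m) (firstSet (k + m) j) (tprod F (Fin.append (g ∘ ρ) w)) =
      symOn F H (k + m) (firstSet (k + m) j) (tprod F (Fin.append g w)) := by
  rw [← Fin.append_comp_viaFintypeEmbedding_castAddEmb]
  refine symOn_tprod_comp F H (viaFintypeEmbedding_mem_permsOn (fun i => ?_) ρ) _
  simp only [firstSet, mem_filter, mem_univ, true_and, Fin.coe_castAddEmb, Fin.val_castAdd]
  exact i.isLt.trans_le hkj

end Elementary

section Cast

variable {m m' : ℕ}

theorem tpCast_refl (v : TP F H m) : tpCast F H (rfl : m = m) v = v := by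
  simp [tpCast]

theorem tpCast_tprod (hm : m = m') (g : Fin m → H) :
    tpCast F H hm (tprod F g) = tprod F (g ∘ Fin.cast hm.symm) :=
  reindex_tprod _ _

theorem tpCast_symOn_firstSet (hm : m = m') (j : ℕ) (v : TP F H m) :
    tpCast F H hm (symOn F H m (firstSet m j) v) =
      symOn F H m' (firstSet m' j) (tpCast F H hm v) := by
  subst hm
  simp only [tpCast_refl]

theorem tpCast_mem_Hmix (hm : m = m') {j : ℕ} {v : TP F H m} (hv : v ∈ Hmix F H m j) :
    tpCast F H hm v ∈ Hmix F H m' j := by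
  subst hm
  rwa [tpCast_refl]

theorem tpCast_tprod_append_snoc {k q : ℕ} (hm : k + 1 + q = k + (q + 1)) (g : Fin k → H)
    (y : H) (w : Fin q → H) :
    tpCast F H hm (tprod F (Fin.append (Fin.snoc g y) w)) =
      tprod F (Fin.append g (Fin.cons y w)) := by
  rw [tpCast_tprod, Fin.append_left_snoc]
  rfl

end Cast

end

section ElementaryElements

variable {k m : ℕ}

theorem elem_eq_smul_sum_symOn (g : Fin k → H) (w : Fin m → H) :
    elem F H k m g w = (k.factorial : F) •
      ∑ τ : Perm (Fin m), (Perm.sign τ : ℤ) •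
        symOn F H (k + m) (firstSet (k + m) k) (tprod F (Fin.append g (w ∘ τ))) := by
  have hk : (k.factorial : F) ≠ 0 := by simp [Nat.factorial_ne_zero]
  simp only [symOn_firstSet_tprod_append, elem, ← Int.cast_smul_eq_zsmul F, Finset.smul_sum]
  rw [Finset.sum_comm]
  refine Finset.sum_congr rfl fun τ _ => Finset.sum_congr rfl fun ρ _ => ?_
  rw [smul_comm _ (k.factorial : F)⁻¹, smul_smul, mul_inv_cancel₀ hk, one_smul]

theorem elem_mem_Hmix (g : Fin k → H) (w : Fin m → H) :
    elem F H k m g w ∈ Hmix F H (k + m) k := by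
  have hfac : (k.factorial : F) * m.factorial ≠ 0 := by simp [Nat.factorial_ne_zero]
  have h := symOn_altOn_tprod_append F H g w
  rw [← mul_inv, ← inv_smul_eq_iff₀ (inv_ne_zero hfac), inv_inv] at h
  rw [← h]
  exact Submodule.smul_mem _ _ ⟨_, rfl⟩

end ElementaryElements

theorem dStarOp_elem (k q : ℕ) (h : Fin k → H) (x : Fin (q + 1) → H) :
    dStarOp F H (k + (q + 1)) (k + 1) (elem F H k (q + 1) h x) =
      ∑ i : Fin (q + 1), ((-1 : ℤ) ^ (i : ℕ)) •
        tpCast F H (Nat.succ_add_eq_add_succ k q)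
          (elem F H (k + 1) q (Fin.snoc h (x i)) (x ∘ i.succAbove)) := by
  have lhs : dStarOp F H (k + (q + 1)) (k + 1) (elem F H k (q + 1) h x) =
      ((k + 1).factorial : F) • ∑ τ : Perm (Fin (q + 1)), (Perm.sign τ : ℤ) •
        symOn F H (k + (q + 1)) (firstSet (k + (q + 1)) (k + 1))
          (tprod F (Fin.append h (x ∘ τ))) := by
    rw [dStarOp, LinearMap.smul_apply, elem]
    simp only [map_sum, ← Int.cast_smul_eq_zsmul F, map_smul,
      symOn_firstSet_tprod_append_comp F H k.le_succ]
    rw [Finset.sum_const, card_univ, Fintype.card_perm, Fintype.card_fin,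
      ← Nat.cast_smul_eq_nsmul F, smul_smul, ← Nat.cast_mul, ← Nat.factorial_succ]
  have rhs (i : Fin (q + 1)) :
      tpCast F H (Nat.succ_add_eq_add_succ k q)
          (elem F H (k + 1) q (Fin.snoc h (x i)) (x ∘ i.succAbove)) =
        ((k + 1).factorial : F) • ∑ τ : Perm (Fin q), (Perm.sign τ : ℤ) •
          symOn F H (k + (q + 1)) (firstSet (k + (q + 1)) (k + 1))
            (tprod F (Fin.append h (Fin.cons (x i) (x ∘ i.succAbove ∘ τ)))) := by
    simp only [elem_eq_smul_sum_symOn, map_smul, map_sum, map_zsmul, tpCast_symOn_firstSet,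
      tpCast_tprod_append_snoc]
    rfl
  rw [lhs, Perm.sum_sign_smul_comp_succ
    (fun w => symOn F H _ (firstSet _ (k + 1)) (tprod F (Fin.append h w))), Finset.smul_sum]
  exact Finset.sum_congr rfl fun i _ => by rw [rhs]; exact smul_comm _ _ _

theorem dStarOp_mem_Hmix (k q : ℕ) {v : TP F H (k + (q + 1))}
    (hv : v ∈ Hmix F H (k + (q + 1)) k) :
    dStarOp F H (k + (q + 1)) (k + 1) v ∈ Hmix F H (k + (q + 1)) (k + 1) := by
  obtain ⟨w, rfl⟩ := hv
  induction w using PiTensorProduct.induction_on with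
  | smul_tprod r g =>
    rw [map_smul, map_smul, ← Fin.append_castAdd_natAdd (f := g), LinearMap.comp_apply,
      symOn_altOn_tprod_append, map_smul, dStarOp_elem]
    refine Submodule.smul_mem _ _ (Submodule.smul_mem _ _ (Submodule.sum_mem _ fun i _ => ?_))
    exact zsmul_mem (tpCast_mem_Hmix F H _ (elem_mem_Hmix F H _ _)) _
  | add a b ha hb =>
    rw [map_add, map_add]
    exact add_mem ha hb

/-- Well-definedness of d̆*: for all `k ≥ 1` (here `k+1` with `k : ℕ`) and `q`
with `n = k + q`, the operator `k·(S_{{1,…,k}} ⊗ id)` maps `H_{k-1,q+1}` into `H_{k,q}`,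
and on elementary tensors
`k·(S ⊗ id)(h₁⊙…⊙h_{k-1} ⊗ x₁∧…∧x_{q+1}) =
  Σ_i (-1)^{i-1} h₁⊙…⊙h_{k-1}⊙x_i ⊗ x₁∧…∧x̂_i∧…∧x_{q+1}`. -/
theorem dStarOp_wellDefined (k q : ℕ) :
    (∀ v ∈ Hmix F H (k + (q + 1)) k,
      dStarOp F H (k + (q + 1)) (k + 1) v ∈ Hmix F H (k + (q + 1)) (k + 1)) ∧
    (∀ (h : Fin k → H) (x : Fin (q + 1) → H),
      dStarOp F H (k + (q + 1)) (k + 1) (elem F H k (q + 1) h x) =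
        ∑ i : Fin (q + 1),
          ((-1 : ℤ) ^ (i : ℕ)) •
            tpCast F H (by omega : (k + 1) + q = k + (q + 1))
              (elem F H (k + 1) q (Fin.snoc h (x i)) (x ∘ i.succAbove))) :=
  ⟨fun _ => dStarOp_mem_Hmix F H k q, dStarOp_elem F H k q⟩
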